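/- Let k be a natural number, let x_i < x3s < x_{i+1} be real numbers with h = x_{i+1} − x_i and h3p = x_{i+1} − x3s, let l > 0 and y_{j−1} = y_j − l. Let u⁻, u⁺ : ℝ² → ℝ be of class C^{k+1}. Suppose K is a constant with |∂_x^{k+1} u⁻(x, y_{j−1})| ≤ K and |∂_x^{k+1} u⁺(x, y_{j−1})| ≤ K for all x ∈ [x_i, x_{i+1}], and M is a constant with |∂_x^{p} ∂_y^{q} u⁻(x,y)| ≤ M for all (x,y) ∈ [x_i, x_{i+1}] × [y_{j−1}, y_j] and all p, q ≥ 0 with p + q = k + 1. Then |u⁺(x_{i+1}, y_{j−1}) − Σ_{p=0}^{k} Σ_{q=0}^{k−p} (h^p (−l)^q)/(p! q!) · ∂_x^p ∂_y^q u⁻(x_i, y_j) − Σ_{r=0}^{k} (h3p)^r / r! · (∂_x^r u⁺(x3s, y_{j−1}) − ∂_x^r u⁻(x3s, y_{j−1}))| ≤ 2K h^{k+1}/(k+1)! + M (h + l)^{k+1}/(k+1)!. -/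

import Mathlib

/-!
The error splits into three Taylor remainders. Along the line `y = y_{j-1}`, both `u⁺` and `u⁻`
are expanded in `x` from the interface point `x3s` to `x_{i+1}`; the difference of these two
expansions is exactly the jump sum, and each Lagrange remainder is at most
`K h3p^{k+1}/(k+1)! ≤ K h^{k+1}/(k+1)!`. The remaining term compares `u⁻(x_{i+1}, y_{j-1})` with
its two-dimensional Taylor polynomial at `(x_i, y_j)`: expand first in `y` at `x = x_{i+1}`, then
each `∂_y^q u⁻(·, y_j)` in `x` to order `k - q`. The remainders `M l^{k+1}/(k+1)!` and
`l^q/q! · M h^{k+1-q}/(k+1-q)!` add up to `M (h + l)^{k+1}/(k+1)!` by the binomial theorem.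
-/

open Set Finset
open scoped Nat

theorem add_pow_div_factorial {𝕂 : Type*} [Field 𝕂] [CharZero 𝕂] (a b : 𝕂) (m : ℕ) :
    (a + b) ^ m / m ! = ∑ q ∈ range (m + 1), b ^ q / q ! * (a ^ (m - q) / (m - q)!) := by
  rw [add_comm, add_pow, sum_div]
  refine sum_congr rfl fun q hq => ?_
  have hqm : q ≤ m := Nat.lt_succ_iff.mp (mem_range.mp hq)
  rw [← Nat.choose_mul_factorial_mul_factorial hqm]
  have hchoose : (m.choose q : 𝕂) ≠ 0 := Nat.cast_ne_zero.mpr (Nat.choose_pos hqm).ne'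
  push_cast
  field_simp

theorem taylorWithinEval_eq_sum_iteratedDeriv {f : ℝ → ℝ} {n : ℕ} {s : Set ℝ} {a : ℝ}
    (hf : ContDiff ℝ n f) (hs : UniqueDiffOn ℝ s) (ha : a ∈ s) (b : ℝ) :
    taylorWithinEval f n s a b
      = ∑ i ∈ range (n + 1), (b - a) ^ i / i ! * iteratedDeriv i f a := by
  rw [taylor_within_apply]
  refine sum_congr rfl fun i hi => ?_
  have hin : (i : WithTop ℕ∞) ≤ n := by exact_mod_cast Nat.lt_succ_iff.mp (mem_range.mp hi)
  rw [iteratedDerivWithin_eq_iteratedDeriv hs ((hf.of_le hin).contDiffAt) ha, smul_eq_mul]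
  ring

theorem abs_sub_taylor_sum_le {f : ℝ → ℝ} {n : ℕ} {a b C : ℝ} (hf : ContDiff ℝ (n + 1) f)
    (hC : ∀ t ∈ uIcc a b, |iteratedDeriv (n + 1) f t| ≤ C) :
    |f b - ∑ i ∈ range (n + 1), (b - a) ^ i / i ! * iteratedDeriv i f a|
      ≤ C * |b - a| ^ (n + 1) / (n + 1)! := by
  rcases eq_or_ne a b with rfl | hab
  · rw [← taylorWithinEval_eq_sum_iteratedDeriv hf.of_succ uniqueDiffOn_univ (mem_univ a),
      taylorWithinEval_self]
    simp
  obtain ⟨t, ht, hrem⟩ := taylor_mean_remainder_lagrange_iteratedDeriv hab hf.contDiffOn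
  rw [← taylorWithinEval_eq_sum_iteratedDeriv hf.of_succ (uniqueDiffOn_uIcc hab)
    left_mem_uIcc, hrem, abs_div, abs_mul, abs_pow, Nat.abs_cast]
  gcongr
  exact hC t (uIoo_subset_uIcc_self ht)

theorem sum_range_sum_range_sub_comm {M : Type*} [AddCommMonoid M] (n : ℕ) (f : ℕ → ℕ → M) :
    ∑ p ∈ range (n + 1), ∑ q ∈ range (n - p + 1), f p q
      = ∑ q ∈ range (n + 1), ∑ p ∈ range (n - q + 1), f p q :=
  sum_comm' fun p q => by simp only [Finset.mem_range]; omega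

theorem abs_sub_sum_mul_le {ι : Type*} {s : Finset ι} {r A : ℝ} {c g t B : ι → ℝ}
    (hr : |r - ∑ i ∈ s, c i * g i| ≤ A) (hg : ∀ i ∈ s, |g i - t i| ≤ B i) :
    |r - ∑ i ∈ s, c i * t i| ≤ A + ∑ i ∈ s, |c i| * B i :=
  calc |r - ∑ i ∈ s, c i * t i|
        = |(r - ∑ i ∈ s, c i * g i) + ∑ i ∈ s, c i * (g i - t i)| := by
        rw [← sub_add_sub_cancel r (∑ i ∈ s, c i * g i), ← sum_sub_distrib]
        simp only [mul_sub]
    _ ≤ |r - ∑ i ∈ s, c i * g i| + ∑ i ∈ s, |c i| * |g i - t i| :=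
        (abs_add_le _ _).trans (add_le_add le_rfl ((abs_sum_le_sum_abs _ _).trans_eq
          (sum_congr rfl fun i _ => abs_mul _ _)))
    _ ≤ A + ∑ i ∈ s, |c i| * B i := by
        gcongr with i hi
        exact hg i hi

theorem contDiff_iteratedDeriv_snd {𝕜 E F : Type*} [NontriviallyNormedField 𝕜]
    [NormedAddCommGroup E] [NormedSpace 𝕜 E] [NormedAddCommGroup F] [NormedSpace 𝕜 F]
    {u : E → 𝕜 → F} {N : ℕ} (hu : ContDiff 𝕜 N (fun p : E × 𝕜 => u p.1 p.2)) :
    ∀ q ≤ N, ContDiff 𝕜 (N - q : ℕ) (fun p : E × 𝕜 => iteratedDeriv q (u p.1) p.2)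
  | 0, _ => by simpa using hu
  | q + 1, hq => by
    have hD := contDiff_iteratedDeriv_snd hu q (by omega)
    have hderiv : ContDiff 𝕜 (N - (q + 1) : ℕ)
        (fun p : E × 𝕜 => fderiv 𝕜 (fun y => iteratedDeriv q (u p.1) y) p.2 1) :=
      (ContDiff.fderiv (f := fun (p : E × 𝕜) y => iteratedDeriv q (u p.1) y)
        (hD.comp (contDiff_fst.fst.prodMk contDiff_snd)) contDiff_snd
            (by exact_mod_cast (show N - (q + 1) + 1 ≤ N - q by omega))).clm_apply
        contDiff_const
    simp only [iteratedDeriv_succ]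
    exact hderiv

theorem abs_sub_taylor_sum₂_le {u : ℝ → ℝ → ℝ} {n : ℕ}
    (hu : ContDiff ℝ (n + 1) (fun p : ℝ × ℝ => u p.1 p.2)) {x₀ x₁ y₀ y₁ M : ℝ}
    (hM : ∀ p q : ℕ, p + q = n + 1 → ∀ x ∈ uIcc x₀ x₁, ∀ y ∈ uIcc y₀ y₁,
      |iteratedDeriv p (fun x' => iteratedDeriv q (fun y' => u x' y') y) x| ≤ M) :
    |u x₁ y₁ - ∑ p ∈ range (n + 1), ∑ q ∈ range (n - p + 1),
        ((x₁ - x₀) ^ p * (y₁ - y₀) ^ q) / ((p ! : ℝ) * q !) *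
          iteratedDeriv p (fun x' => iteratedDeriv q (fun y' => u x' y') y₀) x₀|
      ≤ M * (|x₁ - x₀| + |y₁ - y₀|) ^ (n + 1) / (n + 1)! := by
  have hy : |u x₁ y₁ - ∑ q ∈ range (n + 1), (y₁ - y₀) ^ q / q ! * iteratedDeriv q (u x₁) y₀|
      ≤ M * |y₁ - y₀| ^ (n + 1) / (n + 1)! :=
    abs_sub_taylor_sum_le (f := u x₁) (hu.comp (contDiff_const.prodMk contDiff_id))
      fun t ht => by simpa using hM 0 (n + 1) (zero_add _) x₁ right_mem_uIcc t ht
  have hx : ∀ q ≤ n, |iteratedDeriv q (u x₁) y₀ - ∑ p ∈ range (n - q + 1),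
      (x₁ - x₀) ^ p / p ! * iteratedDeriv p (fun x' => iteratedDeriv q (u x') y₀) x₀|
      ≤ M * |x₁ - x₀| ^ (n - q + 1) / (n - q + 1)! := by
    intro q hq
    have hsmooth := (contDiff_iteratedDeriv_snd (N := n + 1) (by exact_mod_cast hu) q
      (by omega)).comp (contDiff_id.prodMk (contDiff_const (c := y₀)))
    rw [show n + 1 - q = n - q + 1 by omega] at hsmooth
    exact abs_sub_taylor_sum_le (f := fun x => iteratedDeriv q (u x) y₀)
      (by exact_mod_cast hsmooth) fun t ht => hM _ _ (by omega) t ht y₀ left_mem_uIcc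
  have hsum : ∑ p ∈ range (n + 1), ∑ q ∈ range (n - p + 1),
        ((x₁ - x₀) ^ p * (y₁ - y₀) ^ q) / ((p ! : ℝ) * q !) *
          iteratedDeriv p (fun x' => iteratedDeriv q (fun y' => u x' y') y₀) x₀
      = ∑ q ∈ range (n + 1), (y₁ - y₀) ^ q / q ! * ∑ p ∈ range (n - q + 1),
          (x₁ - x₀) ^ p / p ! * iteratedDeriv p (fun x' => iteratedDeriv q (u x') y₀) x₀ := by
    rw [sum_range_sum_range_sub_comm]
    simp only [mul_sum]
    exact sum_congr rfl fun q _ => sum_congr rfl fun p _ => by ring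
  rw [hsum]
  calc _ ≤ M * |y₁ - y₀| ^ (n + 1) / (n + 1)! + ∑ q ∈ range (n + 1),
          |(y₁ - y₀) ^ q / q !| * (M * |x₁ - x₀| ^ (n - q + 1) / (n - q + 1)!) :=
        abs_sub_sum_mul_le hy fun q hq => hx q (Nat.lt_succ_iff.mp (mem_range.mp hq))
    _ = M * (|x₁ - x₀| + |y₁ - y₀|) ^ (n + 1) / (n + 1)! := by
        symm
        rw [mul_div_assoc, add_pow_div_factorial, sum_range_succ, add_comm, mul_add, mul_sum]
        simp only [abs_div, abs_pow, Nat.abs_cast]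
        congr 1
        · simp [mul_div_assoc]
        · refine sum_congr rfl fun q hq => ?_
          rw [show n + 1 - q = n - q + 1 by have := Finset.mem_range.mp hq; omega]
          ring

/-- Remark 2: jump-corrected two-dimensional Taylor expansion for an irregular point
whose grid line parallel to the x-axis, one level below the stencil center, crosses
the interface at `(x3s, yjm1)`. -/
theorem jump_corrected_taylor_x_below
    (k : ℕ) (xi x3s xip1 : ℝ) (hx1 : xi < x3s) (hx2 : x3s < xip1)
    (h : ℝ) (hh : h = xip1 - xi)
    (h3p : ℝ) (hh3p : h3p = xip1 - x3s)
    (l : ℝ) (hl : 0 < l) (yj yjm1 : ℝ) (hy : yjm1 = yj - l)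
    (um up : ℝ → ℝ → ℝ)
    (hum : ContDiff ℝ (k + 1) (fun q : ℝ × ℝ => um q.1 q.2))
    (hup : ContDiff ℝ (k + 1) (fun q : ℝ × ℝ => up q.1 q.2))
    (K M : ℝ)
    (hKm : ∀ x ∈ Set.Icc xi xip1,
      |iteratedDeriv (k + 1) (fun x' => um x' yjm1) x| ≤ K)
    (hKp : ∀ x ∈ Set.Icc xi xip1,
      |iteratedDeriv (k + 1) (fun x' => up x' yjm1) x| ≤ K)
    (hM : ∀ p q : ℕ, p + q = k + 1 → ∀ x ∈ Set.Icc xi xip1, ∀ y ∈ Set.Icc yjm1 yj,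
      |iteratedDeriv p (fun x' => iteratedDeriv q (fun y' => um x' y') y) x| ≤ M) :
    |up xip1 yjm1
      - ∑ p ∈ Finset.range (k + 1), ∑ q ∈ Finset.range (k - p + 1),
          (h ^ p * (-l) ^ q) / ((p.factorial : ℝ) * (q.factorial : ℝ)) *
            iteratedDeriv p (fun x' => iteratedDeriv q (fun y' => um x' y') yj) xi
      - ∑ r ∈ Finset.range (k + 1),
          h3p ^ r / (r.factorial : ℝ) *
            (iteratedDeriv r (fun x' => up x' yjm1) x3s
              - iteratedDeriv r (fun x' => um x' yjm1) x3s)|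
    ≤ 2 * K * h ^ (k + 1) / ((k + 1).factorial : ℝ)
      + M * (h + l) ^ (k + 1) / ((k + 1).factorial : ℝ) := by
  subst hh hh3p hy
  have hxi : xi < xip1 := hx1.trans hx2
  have hK : 0 ≤ K := (abs_nonneg _).trans (hKp xi ⟨le_rfl, hxi.le⟩)
  have htaylor_x : ∀ w : ℝ → ℝ → ℝ, ContDiff ℝ (k + 1) (fun q : ℝ × ℝ => w q.1 q.2) →
      (∀ x ∈ Icc xi xip1, |iteratedDeriv (k + 1) (fun x' => w x' (yj - l)) x| ≤ K) →
      |w xip1 (yj - l) - ∑ r ∈ range (k + 1),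
        (xip1 - x3s) ^ r / r ! * iteratedDeriv r (fun x' => w x' (yj - l)) x3s|
        ≤ K * (xip1 - xi) ^ (k + 1) / (k + 1)! := by
    intro w hw hwK
    refine (abs_sub_taylor_sum_le (hw.comp (contDiff_id.prodMk contDiff_const)) fun t ht =>
      hwK t ?_).trans ?_
    · rw [Set.uIcc_of_le hx2.le] at ht
      exact ⟨hx1.le.trans ht.1, ht.2⟩
    · rw [abs_of_pos (sub_pos.mpr hx2)]
      gcongr
  have htaylor₂ := abs_sub_taylor_sum₂_le (x₀ := xi) (x₁ := xip1) (y₀ := yj) (y₁ := yj - l) hum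
    fun p q hpq x hx y hy => hM p q hpq x (by rwa [Set.uIcc_of_le hxi.le] at hx) y
      (by rwa [Set.uIcc_of_ge (by linarith)] at hy)
  rw [abs_of_pos (sub_pos.mpr hxi), sub_sub_cancel_left, abs_neg,
    abs_of_pos hl] at htaylor₂
  simp only [mul_sub, sum_sub_distrib]
  obtain ⟨hA₁, hA₂⟩ := abs_le.mp (htaylor_x up hup hKp)
  obtain ⟨hB₁, hB₂⟩ := abs_le.mp (htaylor_x um hum hKm)
  obtain ⟨hC₁, hC₂⟩ := abs_le.mp htaylor₂
  rw [mul_assoc 2 K, mul_div_assoc 2, abs_le]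
  constructor <;> linarith
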